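/- Under Assumptions A1–A3 and A5: (i) if (u, λ) ∈ U × Λ* solves the interface impedance trace formulation ((A + α T^⊤ M T) u − T^⊤ λ = f and −α X^⊤ (M + X^⊤ M X) T u + (I + X^⊤) λ = 0), then λ solves the Schur complement equation (I − X^⊤ S) λ = d; (ii) conversely, if λ ∈ Λ* solves (I − X^⊤ S) λ = d and u := Ã^{-1} (f + T^⊤ λ), then (u, λ) solves the interface impedance trace formulation. -/

import Mathlib

/-- The transpose (dual map) `B^⊤ : Y* → X*` of a bounded linear operator `B : X → Y`. -/
noncomputable def trOp {X Y : Type*} [NormedAddCommGroup X] [NormedSpace ℂ X]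
    [NormedAddCommGroup Y] [NormedSpace ℂ Y] (B : X →L[ℂ] Y) :
    (Y →L[ℂ] ℂ) →L[ℂ] (X →L[ℂ] ℂ) :=
  (ContinuousLinearMap.compL ℂ X Y ℂ).flip B

/-- The scattering operator `S = −I + α (M + X^⊤ M X) T Ã⁻¹ T^⊤`, with `Atinv = Ã⁻¹`. -/
noncomputable def scatOp {U Lam : Type*}
    [NormedAddCommGroup U] [NormedSpace ℂ U] [NormedAddCommGroup Lam] [NormedSpace ℂ Lam]
    (T : U →L[ℂ] Lam) (X : Lam →L[ℂ] Lam) (M : Lam →L[ℂ] (Lam →L[ℂ] ℂ))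
    (Atinv : (U →L[ℂ] ℂ) →L[ℂ] U) (α : ℂ) :
    (Lam →L[ℂ] ℂ) →L[ℂ] (Lam →L[ℂ] ℂ) :=
  -(ContinuousLinearMap.id ℂ (Lam →L[ℂ] ℂ)) +
    α • (((M + (trOp X).comp (M.comp X)).comp T).comp (Atinv.comp (trOp T)))

/-!
Writing `N := M + X^⊤ M X`, the residual of the Schur complement equation is
`λ − X^⊤ S λ − d = (I + X^⊤) λ − α X^⊤ N T Ã⁻¹ (f + T^⊤ λ)`, a purely linear identity. Since `Ã` is
invertible, the first trace equation says precisely `u = Ã⁻¹ (f + T^⊤ λ)`, and then the right-hand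
side is the second trace equation.
-/

section SchurComplement

variable {U Lam : Type*} [NormedAddCommGroup U] [NormedSpace ℂ U]
  [NormedAddCommGroup Lam] [NormedSpace ℂ Lam]
  (T : U →L[ℂ] Lam) (X : Lam →L[ℂ] Lam) (M : Lam →L[ℂ] (Lam →L[ℂ] ℂ))
  (Atinv : (U →L[ℂ] ℂ) →L[ℂ] U) (α : ℂ)

lemma scatOp_apply (lam : Lam →L[ℂ] ℂ) :
    scatOp T X M Atinv α lam =
      -lam + α • (M + (trOp X).comp (M.comp X)) (T (Atinv (trOp T lam))) := by
  rfl

lemma sub_trOp_scatOp_sub_eq (f : U →L[ℂ] ℂ) (lam : Lam →L[ℂ] ℂ) :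
    lam - trOp X (scatOp T X M Atinv α lam) -
        α • trOp X ((M + (trOp X).comp (M.comp X)) (T (Atinv f))) =
      lam + trOp X lam -
        α • trOp X ((M + (trOp X).comp (M.comp X)) (T (Atinv (f + trOp T lam)))) := by
  simp only [scatOp_apply, map_add, map_neg, map_smul, smul_add]
  abel

end SchurComplement

theorem statement10
    {U Lam : Type*}
    [NormedAddCommGroup U] [InnerProductSpace ℂ U]
    [NormedAddCommGroup Lam] [InnerProductSpace ℂ Lam]
    (T : U →L[ℂ] Lam) (X : Lam →L[ℂ] Lam)
    (A : U →L[ℂ] (U →L[ℂ] ℂ)) (f : U →L[ℂ] ℂ)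
    (α : ℂ)
    (M : Lam →L[ℂ] (Lam →L[ℂ] ℂ))
    -- Assumption A5: `Ã = A + α T^⊤ M T` has a bounded inverse
    (Atinv : (U →L[ℂ] ℂ) →L[ℂ] U)
    (hAt_l : ∀ u : U, Atinv ((A + α • ((trOp T).comp (M.comp T))) u) = u)
    (hAt_r : ∀ g : U →L[ℂ] ℂ, (A + α • ((trOp T).comp (M.comp T))) (Atinv g) = g) :
    -- (i)
    (∀ (u : U) (lam : Lam →L[ℂ] ℂ),
      (A + α • ((trOp T).comp (M.comp T))) u - trOp T lam = f →
      -(α • trOp X ((M + (trOp X).comp (M.comp X)) (T u))) + (lam + trOp X lam) = 0 →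
      lam - trOp X (scatOp T X M Atinv α lam) =
        α • trOp X ((M + (trOp X).comp (M.comp X)) (T (Atinv f)))) ∧
    -- (ii)
    (∀ lam : Lam →L[ℂ] ℂ,
      lam - trOp X (scatOp T X M Atinv α lam) =
        α • trOp X ((M + (trOp X).comp (M.comp X)) (T (Atinv f))) →
      (A + α • ((trOp T).comp (M.comp T))) (Atinv (f + trOp T lam)) - trOp T lam = f ∧
      -(α • trOp X ((M + (trOp X).comp (M.comp X)) (T (Atinv (f + trOp T lam))))) +
        (lam + trOp X lam) = 0) := by
  refine ⟨fun u lam h₁ h₂ => ?_, fun lam h => ⟨?_, ?_⟩⟩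
  · have hu : u = Atinv (f + trOp T lam) := by rw [← h₁, sub_add_cancel, hAt_l]
    rwa [← sub_eq_zero, sub_trOp_scatOp_sub_eq, ← hu, ← neg_add_eq_sub]
  · rw [hAt_r, add_sub_cancel_right]
  · rwa [← sub_eq_zero, sub_trOp_scatOp_sub_eq, ← neg_add_eq_sub] at h
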